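/- arXiv:1905.12709 — 5 statements merged into one kernel-verified Lean document; each statement's English description precedes it below -/
import Mathlib

section
/- Let A ⊆ ℝ^d be a nonempty closed set. Then the distance function d_A(x) = dist(x, A) is locally semiconcave on ℝ^d \ A: for each point x₀ ∈ ℝ^d \ A there is an open convex neighbourhood U ⊆ ℝ^d \ A of x₀, a constant a > 0, and a convex function g on U such that d_A(x) = a‖x‖² − g(x) on U. -/
open Metric
open scoped RealInnerProductSpace

/-!
Write `S = a‖p‖ + b‖q‖` and `m = ‖a • p + b • q‖` with `a + b = 1`. Then
`S² - m² = ab (‖p - q‖² - (‖p‖ - ‖q‖)²) ≤ ab ‖p - q‖²`, and `0 ≤ S - m` by the triangle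
inequality, so `(S - m) δ ≤ (S - m)(S + m) ≤ ab ‖p - q‖²` once `‖p‖, ‖q‖ ≥ δ`. Applied to
`p = x - z`, `q = y - z`, this makes every `dist · z` with `z ∈ A` semiconcave with constant `1/δ`
on a convex set at distance `≥ δ` from `A`. The modulus is uniform in `z`, so it passes to the
infimum `infDist · A`; a ball of radius `infDist x₀ A / 2` around `x₀` is such a set.
-/

variable {E : Type*} [NormedAddCommGroup E] [InnerProductSpace ℝ E]

theorem smul_norm_add_smul_norm_sub_norm_le {p q : E} {δ a b : ℝ} (hδ : 0 < δ)
    (hp : δ ≤ ‖p‖) (hq : δ ≤ ‖q‖) (ha : 0 ≤ a) (hb : 0 ≤ b) (hab : a + b = 1) :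
    a * ‖p‖ + b * ‖q‖ - ‖a • p + b • q‖ ≤ a * b * ‖p - q‖ ^ 2 / δ := by
  set S := a * ‖p‖ + b * ‖q‖ with hS
  set m := ‖a • p + b • q‖
  have hm : m ^ 2 = a ^ 2 * ‖p‖ ^ 2 + 2 * (a * b) * ⟪p, q⟫ + b ^ 2 * ‖q‖ ^ 2 := by
    rw [norm_add_sq_real, norm_smul, norm_smul, real_inner_smul_left, real_inner_smul_right,
      Real.norm_of_nonneg ha, Real.norm_of_nonneg hb]
    ring
  have hm_le : m ≤ S := (norm_add_le _ _).trans_eq <| by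
    rw [norm_smul, norm_smul, Real.norm_of_nonneg ha, Real.norm_of_nonneg hb]
  have hδS : δ ≤ S := by nlinarith
  have hsq : S ^ 2 - m ^ 2 ≤ a * b * ‖p - q‖ ^ 2 := by
    rw [hm, hS, norm_sub_sq_real]
    nlinarith [mul_nonneg (mul_nonneg ha hb) (sq_nonneg (‖p‖ - ‖q‖))]
  rw [le_div_iff₀ hδ]
  nlinarith [norm_nonneg (a • p + b • q)]

theorem strongConcaveOn_dist_of_le_dist {s : Set E} {δ : ℝ} {z : E} (hs : Convex ℝ s)
    (hδ : 0 < δ) (hsz : ∀ x ∈ s, δ ≤ dist x z) :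
    StrongConcaveOn s (-(2 / δ)) (dist · z) := by
  refine ⟨hs, fun x hx y hy a b ha hb hab ↦ ?_⟩
  have hcombo : a • x + b • y - z = a • (x - z) + b • (y - z) := by
    rw [smul_sub, smul_sub, sub_add_sub_comm, ← add_smul, hab, one_smul]
  have key := smul_norm_add_smul_norm_sub_norm_le (p := x - z) (q := y - z) hδ
    (dist_eq_norm x z ▸ hsz x hx) (dist_eq_norm y z ▸ hsz y hy) ha hb hab
  rw [sub_sub_sub_cancel_right, ← hcombo] at key
  simp only [dist_eq_norm, smul_eq_mul] at key ⊢
  have hmod : a * b * (-(2 / δ) / 2 * ‖x - y‖ ^ 2) = -(a * b * ‖x - y‖ ^ 2 / δ) := by ring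
  linarith

theorem strongConcaveOn_infDist_of_le_infDist {A s : Set E} {δ : ℝ} (hA : A.Nonempty)
    (hs : Convex ℝ s) (hδ : 0 < δ) (hsA : ∀ x ∈ s, δ ≤ infDist x A) :
    StrongConcaveOn s (-(2 / δ)) (infDist · A) := by
  refine ⟨hs, fun x hx y hy a b ha hb hab ↦ (le_infDist hA).2 fun z hz ↦ ?_⟩
  have hdist := (strongConcaveOn_dist_of_le_dist hs hδ fun w hw ↦
    (hsA w hw).trans (infDist_le_dist_of_mem hz)).2 hx hy ha hb hab
  simp only [smul_eq_mul] at hdist ⊢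
  nlinarith [infDist_le_dist_of_mem (x := x) hz, infDist_le_dist_of_mem (x := y) hz]

theorem distance_function_locally_semiconcave {d : ℕ}
    (A : Set (EuclideanSpace ℝ (Fin d))) (hA : A.Nonempty) (hAc : IsClosed A)
    (x₀ : EuclideanSpace ℝ (Fin d)) (hx₀ : x₀ ∉ A) :
    ∃ U : Set (EuclideanSpace ℝ (Fin d)), IsOpen U ∧ Convex ℝ U ∧ x₀ ∈ U ∧ U ⊆ Aᶜ ∧
      ∃ a : ℝ, 0 < a ∧ ∃ g : EuclideanSpace ℝ (Fin d) → ℝ, ConvexOn ℝ U g ∧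
        ∀ x ∈ U, Metric.infDist x A = a * ‖x‖ ^ 2 - g x := by
  set δ := infDist x₀ A / 2 with hδ_def
  have hδ : 0 < δ := half_pos <| (hAc.notMem_iff_infDist_pos hA).1 hx₀
  have hball : ∀ x ∈ ball x₀ δ, δ ≤ infDist x A := fun x hx ↦ by
    have := infDist_le_infDist_add_dist (x := x₀) (y := x) (s := A)
    rw [mem_ball'] at hx
    linarith
  refine ⟨ball x₀ δ, isOpen_ball, convex_ball x₀ δ, mem_ball_self hδ,
    fun x hx hxA ↦ (hball x hx).not_gt (by rwa [infDist_zero_of_mem hxA]), 1 / δ, by positivity,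
    fun x ↦ 1 / δ * ‖x‖ ^ 2 - infDist x A, ?_, fun x _ ↦ by ring⟩
  have := (strongConcaveOn_iff_convex.1 <|
    strongConcaveOn_infDist_of_le_infDist hA (convex_ball x₀ δ) hδ hball).neg
  refine this.congr fun x _ ↦ ?_
  simp only [Pi.neg_apply]
  ring
end

section
/- Let f be a Lipschitz function on an open set G ⊆ ℝ^d, x ∈ G and ε > 0. If dist(0, ∂_C f(x)) ≥ 2ε, then there exist a unit vector v ∈ S^{d−1} and ρ > 0 such that for all y ∈ U(x, ρ) and 0 < α < ρ one has (f(y + αv) − f(y))/α ≤ −ε. -/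
/-!
Let `p` be the point of the closed convex set `∂_C f(x)` nearest to `0` and `v = -p / ‖p‖`;
then `⟪v, w⟫ ≤ -‖p‖ ≤ -2ε` on `∂_C f(x)`. Gradients at differentiability points near `x` are
bounded by the Lipschitz constant and all their limits lie in `∂_C f(x)`, so by compactness
`⟪v, ∇f z⟫ < -ε` at every differentiability point `z` of a ball around `x`. By Rademacher's
theorem and Fubini, almost every line parallel to `v` meets the non-differentiability set in a
null set; on such a line the fundamental theorem of calculus for the Lipschitz, hence absolutely
continuous, restriction of `f` gives `f (y + α • v) - f y ≤ -ε α`, and continuity of `f`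
extends this from almost every `y` to every `y`.
-/

open Metric Filter

/-- The Clarke generalized gradient of `f` at `x`: the closed convex hull of all limits
of gradients `∇f(xᵢ)` with `xᵢ → x` and `f` differentiable at each `xᵢ`. -/
noncomputable def clarkeGradient {d : ℕ} (f : EuclideanSpace ℝ (Fin d) → ℝ)
    (x : EuclideanSpace ℝ (Fin d)) : Set (EuclideanSpace ℝ (Fin d)) :=
  closure (convexHull ℝ {v | ∃ u : ℕ → EuclideanSpace ℝ (Fin d),
    (∀ i, DifferentiableAt ℝ f (u i)) ∧
    Tendsto u atTop (nhds x) ∧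
    Tendsto (fun i => gradient f (u i)) atTop (nhds v)})

open Set MeasureTheory
open scoped RealInnerProductSpace Topology

theorem exists_norm_eq_one_inner_le_neg_infDist {E : Type*} [NormedAddCommGroup E]
    [InnerProductSpace ℝ E] {C : Set E} (hC : IsComplete C) (hconv : Convex ℝ C)
    (hpos : 0 < infDist 0 C) : ∃ v : E, ‖v‖ = 1 ∧ ∀ w ∈ C, ⟪v, w⟫ ≤ -infDist 0 C := by
  have hne : C.Nonempty := nonempty_iff_ne_empty.2 fun h => by simp [h] at hpos
  obtain ⟨p, hpC, hpmin⟩ := exists_norm_eq_iInf_of_complete_convex hne hC hconv 0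
  have hp : 0 < ‖p‖ := norm_pos_iff.2 fun h => by simp [infDist_zero_of_mem (h ▸ hpC)] at hpos
  have hdist : infDist 0 C ≤ ‖p‖ := by simpa using infDist_le_dist_of_mem hpC (x := 0)
  refine ⟨-‖p‖⁻¹ • p, by simp [norm_smul, hp.ne'], fun w hw => ?_⟩
  have hproj := (norm_eq_iInf_iff_real_inner_le_zero hconv hpC).1 hpmin w hw
  rw [zero_sub, inner_neg_left, inner_sub_right, real_inner_self_eq_norm_sq] at hproj
  calc ⟪-‖p‖⁻¹ • p, w⟫ = -(‖p‖⁻¹ * ⟪p, w⟫) := by rw [real_inner_smul_left, neg_mul]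
    _ ≤ -(‖p‖⁻¹ * ‖p‖ ^ 2) := by gcongr; linarith
    _ = -‖p‖ := by field_simp
    _ ≤ -infDist 0 C := neg_le_neg hdist

theorem convex_clarkeGradient {d : ℕ} (f : EuclideanSpace ℝ (Fin d) → ℝ)
    (x : EuclideanSpace ℝ (Fin d)) : Convex ℝ (clarkeGradient f x) :=
  (convex_convexHull ℝ _).closure

theorem isClosed_clarkeGradient {d : ℕ} (f : EuclideanSpace ℝ (Fin d) → ℝ)
    (x : EuclideanSpace ℝ (Fin d)) : IsClosed (clarkeGradient f x) :=
  isClosed_closure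

theorem mem_clarkeGradient_of_tendsto {d : ℕ} {f : EuclideanSpace ℝ (Fin d) → ℝ}
    {x w : EuclideanSpace ℝ (Fin d)} {u : ℕ → EuclideanSpace ℝ (Fin d)}
    (hdiff : ∀ i, DifferentiableAt ℝ f (u i)) (hu : Tendsto u atTop (𝓝 x))
    (hgrad : Tendsto (fun i => gradient f (u i)) atTop (𝓝 w)) : w ∈ clarkeGradient f x :=
  subset_closure (subset_convexHull ℝ _ ⟨u, hdiff, hu, hgrad⟩)

theorem MeasureTheory.Measure.le_on_open_of_ae_le {X Y : Type*} [TopologicalSpace X]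
    [MeasurableSpace X] [LinearOrder Y] [TopologicalSpace Y] [OrderClosedTopology Y]
    {μ : Measure X} [μ.IsOpenPosMeasure] {U : Set X} {h : X → Y} {c : Y} (hU : IsOpen U)
    (hh : ContinuousOn h U) (hle : ∀ᵐ x ∂μ, x ∈ U → h x ≤ c) : ∀ x ∈ U, h x ≤ c := by
  have hopen : IsOpen (U ∩ h ⁻¹' Ioi c) := hh.isOpen_inter_preimage hU isOpen_Ioi
  have hnull : μ (U ∩ h ⁻¹' Ioi c) = 0 := by
    refine measure_mono_null ?_ (ae_iff.1 hle)
    rintro x ⟨hxU, hx⟩ himp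
    exact not_le.2 hx (himp hxU)
  intro x hx
  by_contra hlt
  exact (hopen.measure_eq_zero_iff μ).1 hnull |>.subset ⟨hx, not_le.1 hlt⟩

theorem ae_ae_add_smul {E : Type*} [NormedAddCommGroup E] [NormedSpace ℝ E]
    [MeasurableSpace E] [BorelSpace E] [SecondCountableTopology E] {μ : Measure E} [SFinite μ]
    [μ.IsAddRightInvariant] {p : E → Prop} (hp : ∀ᵐ z ∂μ, p z) (v : E) :
    ∀ᵐ y ∂μ, ∀ᵐ t : ℝ, p (y + t • v) := by
  obtain ⟨N, hpN, hNmeas, hNnull⟩ := exists_measurable_superset_of_null (ae_iff.1 hp)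
  have hmeas : MeasurableSet {q : E × ℝ | q.1 + q.2 • v ∈ N} :=
    hNmeas.preimage (measurable_fst.add (measurable_snd.smul_const v))
  -- each slice `{y | y + t • v ∈ N}` is a translate of `N`
  have hprod : ∀ᵐ q ∂μ.prod (volume : Measure ℝ), q.1 + q.2 • v ∉ N := by
    rw [ae_iff, Measure.prod_apply_symm (by simpa using hmeas)]
    simp only [preimage_ofPred_eq, not_not]
    simp_rw [show ∀ t : ℝ, {y | y + t • v ∈ N} = (· + t • v) ⁻¹' N from fun _ => rfl,
      measure_preimage_add_right, hNnull, lintegral_zero]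
  filter_upwards [Measure.ae_ae_of_ae_prod hprod] with y hy
  filter_upwards [hy] with t ht
  by_contra hnp
  exact ht (hpN hnp)

theorem LipschitzOnWith.sub_le_mul_of_ae_deriv_le {g : ℝ → ℝ} {K : NNReal} {a b c : ℝ}
    (hab : a ≤ b) (hg : LipschitzOnWith K g (Icc a b))
    (hderiv : ∀ᵐ t, t ∈ Icc a b → deriv g t ≤ c) : g b - g a ≤ c * (b - a) := by
  have hac := (uIcc_of_le hab ▸ hg).absolutelyContinuousOnInterval
  calc g b - g a = ∫ t in a..b, deriv g t := hac.integral_deriv_eq_sub.symm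
    _ ≤ ∫ _ in a..b, c := intervalIntegral.integral_mono_ae_restrict hab
        hac.intervalIntegrable_deriv intervalIntegrable_const
        ((ae_restrict_iff' measurableSet_Icc).2 hderiv)
    _ = c * (b - a) := by simp [mul_comm]

theorem LipschitzOnWith.sub_le_mul_of_ae_fderiv_le {E : Type*} [NormedAddCommGroup E]
    [NormedSpace ℝ E] {F : E → ℝ} {K : NNReal} {U : Set E} (hF : LipschitzOnWith K F U)
    {y v : E} {α c : ℝ} (hα : 0 ≤ α) (hseg : ∀ t ∈ Icc 0 α, y + t • v ∈ U)
    (hderiv : ∀ᵐ t : ℝ, t ∈ Icc 0 α →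
      DifferentiableAt ℝ F (y + t • v) ∧ fderiv ℝ F (y + t • v) v ≤ c) :
    F (y + α • v) - F y ≤ c * α := by
  have hline : LipschitzWith ‖v‖₊ (fun t : ℝ => y + t • v) :=
    LipschitzWith.of_dist_le_mul fun s t => by
      simp [dist_eq_norm, ← sub_smul, norm_smul, mul_comm]
  have hg := (hF.comp hline.lipschitzOnWith hseg).sub_le_mul_of_ae_deriv_le (c := c) hα ?_
  · simpa using hg
  filter_upwards [hderiv] with t ht htI
  obtain ⟨hdiff, hle⟩ := ht htI
  have hline' : HasDerivAt (fun t : ℝ => y + t • v) v t := by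
    simpa using ((hasDerivAt_id t).smul_const v).const_add y
  rwa [(hdiff.hasFDerivAt.comp_hasDerivAt t hline').deriv]

theorem LipschitzOnWith.sub_le_mul_of_fderiv_le {E : Type*} [NormedAddCommGroup E]
    [NormedSpace ℝ E] [FiniteDimensional ℝ E] [MeasurableSpace E] [BorelSpace E]
    {F : E → ℝ} {K : NNReal} {U : Set E} (hF : LipschitzOnWith K F U) (hU : IsOpen U)
    {v : E} {c : ℝ} (hderiv : ∀ z ∈ U, DifferentiableAt ℝ F z → fderiv ℝ F z v ≤ c)
    {y : E} {α : ℝ} (hα : 0 ≤ α) (hseg : ∀ t ∈ Icc 0 α, y + t • v ∈ U) :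
    F (y + α • v) - F y ≤ c * α := by
  let μ : Measure E := Measure.addHaar
  obtain ⟨δ, hδ, hthick⟩ := (isCompact_Icc.image (by fun_prop : Continuous fun t : ℝ => y + t • v)
    ).exists_thickening_subset_open hU (image_subset_iff.2 hseg)
  have hnear : ∀ y' ∈ ball y δ, ∀ t ∈ Icc 0 α, y' + t • v ∈ U := fun y' hy' t ht =>
    hthick (mem_thickening_iff.2 ⟨_, mem_image_of_mem _ ht, by simpa using hy'⟩)
  have hlines : ∀ᵐ y' ∂μ, ∀ᵐ t : ℝ, y' + t • v ∈ U → DifferentiableAt ℝ F (y' + t • v) :=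
    ae_ae_add_smul (hF.ae_differentiableWithinAt_of_mem.mono fun z hz hzU =>
      (hz hzU).differentiableAt (hU.mem_nhds hzU)) v
  have hgood : ∀ᵐ y' ∂μ, y' ∈ ball y δ → F (y' + α • v) - F y' ≤ c * α := by
    filter_upwards [hlines] with y' hy' hy'δ
    refine hF.sub_le_mul_of_ae_fderiv_le hα (hnear y' hy'δ) ?_
    filter_upwards [hy'] with t ht htI
    have hdiff := ht (hnear y' hy'δ t htI)
    exact ⟨hdiff, hderiv _ (hnear y' hy'δ t htI) hdiff⟩
  have hcont : ContinuousOn (fun y' => F (y' + α • v) - F y') (ball y δ) :=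
    (hF.continuousOn.comp (by fun_prop) fun y' hy' => hnear y' hy' α ⟨hα, le_rfl⟩).sub
      (hF.continuousOn.mono fun y' hy' => by simpa using hnear y' hy' 0 ⟨le_rfl, hα⟩)
  exact Measure.le_on_open_of_ae_le isOpen_ball hcont hgood y (mem_ball_self hδ)

theorem eventually_fderiv_apply_lt_of_forall_mem_clarkeGradient {d : ℕ}
    {f : EuclideanSpace ℝ (Fin d) → ℝ} {K : NNReal} {s : Set (EuclideanSpace ℝ (Fin d))}
    {x v : EuclideanSpace ℝ (Fin d)} {c : ℝ} (hs : s ∈ 𝓝 x) (hf : LipschitzOnWith K f s)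
    (hc : ∀ w ∈ clarkeGradient f x, ⟪v, w⟫ < c) :
    ∀ᶠ z in 𝓝 x, DifferentiableAt ℝ f z → fderiv ℝ f z v < c := by
  have hbdd : ∀ᶠ z in 𝓝 x, ‖gradient f z‖ ≤ K :=
    (eventually_mem_nhds_iff.2 hs).mono fun z hz => by
      rw [gradient, LinearIsometryEquiv.norm_map]
      exact norm_fderiv_le_of_lipschitzOn ℝ hz hf
  by_contra! hfar
  obtain ⟨u, hux, hu⟩ := exists_seq_forall_of_frequently (hfar.and_eventually hbdd)
  obtain ⟨w, -, φ, hφ, hlim⟩ :=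
    (isCompact_closedBall (0 : EuclideanSpace ℝ (Fin d)) K).tendsto_subseq
      (x := fun n => gradient f (u n)) fun n => mem_closedBall_zero_iff.2 (hu n).2
  have hw : w ∈ clarkeGradient f x :=
    mem_clarkeGradient_of_tendsto (fun n => (hu (φ n)).1.1)
      (hux.comp hφ.tendsto_atTop) hlim
  have hcw : c ≤ ⟪v, w⟫ := by
    refine ge_of_tendsto' (tendsto_const_nhds.inner hlim) fun n => ?_
    rw [Function.comp_apply, real_inner_comm, inner_gradient_left]
    exact (hu (φ n)).1.2
  exact (hc w hw).not_ge hcw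

theorem decrease_of_clarke_gradient_far_from_zero {d : ℕ}
    {G : Set (EuclideanSpace ℝ (Fin d))} (hG : IsOpen G)
    (f : EuclideanSpace ℝ (Fin d) → ℝ) (K : NNReal) (hf : LipschitzOnWith K f G)
    (x : EuclideanSpace ℝ (Fin d)) (hx : x ∈ G) (ε : ℝ) (hε : 0 < ε)
    (hfar : 2 * ε ≤ Metric.infDist 0 (clarkeGradient f x)) :
    ∃ v : EuclideanSpace ℝ (Fin d), ‖v‖ = 1 ∧ ∃ ρ : ℝ, 0 < ρ ∧
      ∀ y ∈ ball x ρ, ∀ α : ℝ, 0 < α → α < ρ →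
        (f (y + α • v) - f y) / α ≤ -ε := by
  obtain ⟨v, hv, hvC⟩ := exists_norm_eq_one_inner_le_neg_infDist
    (isClosed_clarkeGradient f x).isComplete (convex_clarkeGradient f x) (by linarith)
  have hdesc := eventually_fderiv_apply_lt_of_forall_mem_clarkeGradient (hG.mem_nhds hx) hf
    (c := -ε) fun w hw => by linarith [hvC w hw]
  obtain ⟨ρ, hρ, hball⟩ := eventually_nhds_iff_ball.1 (hdesc.and (hG.mem_nhds hx))
  refine ⟨v, hv, ρ / 2, half_pos hρ, fun y hy α hα hαρ => ?_⟩
  have hseg : ∀ t ∈ Icc 0 α, y + t • v ∈ ball x ρ := fun t ht => by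
    have : dist (y + t • v) y = t := by simp [norm_smul, hv, abs_of_nonneg ht.1]
    rw [mem_ball] at hy ⊢
    linarith [dist_triangle (y + t • v) y x, ht.2]
  have hdecr := (hf.mono fun z hz => (hball z hz).2).sub_le_mul_of_fderiv_le isOpen_ball
    (fun z hz hdiff => ((hball z hz).1 hdiff).le) hα.le hseg
  rw [div_le_iff₀ hα]
  linarith
end

section
/- Let f : ℝ → ℝ be an L-Lipschitz function, and let d(x) = dist(x, graph f) be the distance in ℝ² from x to the graph of f. Then for every x ∈ ℝ² \ graph f and every ξ = (ξ₁, ξ₂) in the Clarke generalized gradient ∂_C d(x), one has |ξ₂| ≥ 1/√(L² + 1). -/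
/-!
At a point `u` off the graph where `d` is differentiable, `∇d(u) = (u - p) / |u - p|` for a
nearest point `p`, because `d ≤ dist · p` with equality at `u`. A nearest point satisfies
`|u₀ - p₀| ≤ L |u₁ - p₁|`: otherwise sliding `p` along the graph towards `u₀` would bring it
closer, the graph rising at most `L` per unit. Hence `|∇d(u)₁| ≥ 1 / √(L² + 1)`, and by the
intermediate value theorem `∇d(u)₁` has the sign of `u₁ - f(u₀)`, which is constant near `x`.
So near `x` all gradients lie in a closed half-plane avoiding the strip `|ξ₁| < 1 / √(L² + 1)`,
and then so does the Clarke gradient.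
-/

open Metric Filter

theorem clarkeGradient_subset_of_eventually {d : ℕ} {g : EuclideanSpace ℝ (Fin d) → ℝ}
    {x : EuclideanSpace ℝ (Fin d)} {C : Set (EuclideanSpace ℝ (Fin d))} (hconv : Convex ℝ C)
    (hclosed : IsClosed C) (h : ∀ᶠ u in nhds x, DifferentiableAt ℝ g u → gradient g u ∈ C) :
    clarkeGradient g x ⊆ C := by
  refine closure_minimal (convexHull_min ?_ hconv) hclosed
  rintro v ⟨u, hdiff, hux, hgrad⟩
  exact hclosed.mem_of_tendsto hgrad ((hux.eventually h).mono fun i hi => hi (hdiff i))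

theorem sq_dist_le_of_infDist_eq_dist {E : Type*} [PseudoMetricSpace E] {s : Set E}
    {u p q : E} (hnear : infDist u s = dist u p) (hq : q ∈ s) :
    dist u p ^ 2 ≤ dist u q ^ 2 :=
  pow_le_pow_left₀ dist_nonneg (hnear ▸ infDist_le_dist_of_mem hq) 2

theorem gradient_infDist_eq_of_infDist_eq_dist {E : Type*} [NormedAddCommGroup E]
    [InnerProductSpace ℝ E] [CompleteSpace E] {s : Set E} {u p : E} (hp : p ∈ s)
    (hnear : infDist u s = dist u p) (hup : u ≠ p)
    (hdiff : DifferentiableAt ℝ (infDist · s) u) :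
    gradient (infDist · s) u = (dist u p)⁻¹ • (u - p) := by
  have hmin : IsLocalMin (fun y => ‖y - p‖ ^ 2 - infDist y s ^ 2) u := by
    refine Eventually.of_forall fun y => ?_
    have h := infDist_le_dist_of_mem (x := y) hp
    simp only [← dist_eq_norm, hnear, sub_self]
    nlinarith [infDist_nonneg (x := y) (s := s)]
  have hderiv := hmin.hasFDerivAt_eq_zero
    ((((hasFDerivAt_id u).sub_const p).norm_sq).sub (hdiff.hasFDerivAt.pow 2))
  refine hdiff.hasGradientAt.gradient.trans ((InnerProductSpace.toDual ℝ E).symm_apply_eq.2 ?_)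
  ext v
  have hv := congrArg (· v) hderiv
  simp only [id_eq, map_sub, ContinuousLinearMap.comp_id, hnear, dist_eq_norm,
    Nat.add_one_sub_one, pow_one, nsmul_eq_mul, Nat.cast_ofNat, sub_apply, smul_apply,
    coe_innerSL_apply, smul_eq_mul, zero_apply, map_smul,
    InnerProductSpace.toDual_apply_apply] at hv ⊢
  have hne : ‖u - p‖ ≠ 0 := norm_ne_zero_iff.2 (sub_ne_zero.2 hup)
  field_simp
  linarith

theorem dist_sq_eq_fin_two (u v : EuclideanSpace ℝ (Fin 2)) :
    dist u v ^ 2 = (u 0 - v 0) ^ 2 + (u 1 - v 1) ^ 2 := by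
  simp [EuclideanSpace.dist_sq_eq, Fin.sum_univ_two, Real.dist_eq, sq_abs]

def planeGraph (f : ℝ → ℝ) : Set (EuclideanSpace ℝ (Fin 2)) := {p | p 1 = f (p 0)}

namespace planeGraph

variable {f : ℝ → ℝ} {L : NNReal} {u p : EuclideanSpace ℝ (Fin 2)}

theorem isClosed (hf : Continuous f) : IsClosed (planeGraph f) :=
  isClosed_eq (EuclideanSpace.proj 1).continuous (hf.comp (EuclideanSpace.proj 0).continuous)

theorem nonempty (f : ℝ → ℝ) : (planeGraph f).Nonempty := ⟨!₂[0, f 0], rfl⟩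

theorem abs_sub_apply_zero_le_of_infDist_eq (hf : LipschitzWith L f) (hp : p ∈ planeGraph f)
    (hnear : infDist u (planeGraph f) = dist u p) :
    |u 0 - p 0| ≤ L * |u 1 - p 1| := by
  set a := u 0 - p 0
  set b := u 1 - p 1
  by_contra! hlt
  set k := |a| - L * |b| with hk
  have hkpos : 0 < k := by linarith
  have ha : 0 < |a| := lt_of_le_of_lt (by positivity) hlt
  have haL : 0 < |a| * (1 + (L : ℝ) ^ 2) := by positivity
  -- the step `t` minimises the upper bound `|a|²(1 - t)² + (|b| + L t |a|)²` on the new distance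
  set t := k / (|a| * (1 + (L : ℝ) ^ 2))
  have ht : 0 < t := by positivity
  have hta : t * (|a| * (1 + (L : ℝ) ^ 2)) = k := div_mul_cancel₀ k haL.ne'
  set s := p 0 + t * a
  have hfar := sq_dist_le_of_infDist_eq_dist hnear (q := !₂[s, f s]) rfl
  rw [dist_sq_eq_fin_two, dist_sq_eq_fin_two] at hfar
  have hlip : |f s - f (p 0)| ≤ L * (t * |a|) := by
    have := hf.dist_le_mul s (p 0)
    rwa [Real.dist_eq, Real.dist_eq, add_sub_cancel_left, abs_mul, abs_of_pos ht] at this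
  have hfirst : u 0 - s = (1 - t) * a := by ring
  have hsecond : |u 1 - f s| ≤ |b| + L * (t * |a|) := by
    have : u 1 - f s = b - (f s - f (p 0)) := by rw [← hp]; ring
    rw [this]
    exact (abs_sub _ _).trans (by gcongr)
  have hsq := pow_le_pow_left₀ (abs_nonneg _) hsecond 2
  change a ^ 2 + b ^ 2 ≤ (u 0 - s) ^ 2 + (u 1 - f s) ^ 2 at hfar
  rw [hfirst, ← sq_abs (u 1 - f s), mul_pow, ← sq_abs a, ← sq_abs b] at hfar
  nlinarith [mul_pos (mul_pos ht ha) hkpos]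

theorem sub_apply_one_mul_pos_of_infDist_eq (hf : LipschitzWith L f) (hu : u ∉ planeGraph f)
    (hp : p ∈ planeGraph f) (hnear : infDist u (planeGraph f) = dist u p) :
    0 < (u 1 - p 1) * (u 1 - f (u 0)) := by
  have hcone := abs_sub_apply_zero_le_of_infDist_eq hf hp hnear
  have hb : u 1 - p 1 ≠ 0 := fun hb => hu <| by
    have ha : u 0 = p 0 := by simpa [hb, sub_eq_zero] using hcone
    change u 1 = f (u 0)
    rw [ha, ← hp]
    exact sub_eq_zero.1 hb
  by_contra! hle
  -- otherwise the graph crosses the horizontal line through `u` between `u 0` and `p 0`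
  have hmem : u 1 ∈ Set.uIcc (f (u 0)) (f (p 0)) := by
    rw [← hp, Set.mem_uIcc]
    rcases mul_nonpos_iff.1 hle with h | h
    · right; constructor <;> linarith [h.1, h.2]
    · left; constructor <;> linarith [h.1, h.2]
  obtain ⟨s, hs, hfs⟩ := intermediate_value_uIcc hf.continuous.continuousOn hmem
  have hfar := sq_dist_le_of_infDist_eq_dist hnear (q := !₂[s, u 1]) hfs.symm
  rw [dist_sq_eq_fin_two, dist_sq_eq_fin_two] at hfar
  change _ ≤ (u 0 - s) ^ 2 + (u 1 - u 1) ^ 2 at hfar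
  have hclose : (u 0 - s) ^ 2 ≤ (u 0 - p 0) ^ 2 := by
    rw [← sq_abs, ← sq_abs (u 0 - p 0), abs_sub_comm, abs_sub_comm (u 0)]
    exact pow_le_pow_left₀ (abs_nonneg _) (Set.abs_sub_left_of_mem_uIcc hs) 2
  nlinarith [pow_pos (abs_pos.2 hb) 2, sq_abs (u 1 - p 1)]

theorem dist_le_sqrt_mul_abs_of_infDist_eq (hf : LipschitzWith L f) (hp : p ∈ planeGraph f)
    (hnear : infDist u (planeGraph f) = dist u p) :
    dist u p ≤ √((L : ℝ) ^ 2 + 1) * |u 1 - p 1| := by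
  have hcone :=
    pow_le_pow_left₀ (abs_nonneg _) (abs_sub_apply_zero_le_of_infDist_eq hf hp hnear) 2
  rw [← Real.sqrt_sq dist_nonneg, ← Real.sqrt_sq_eq_abs, ← Real.sqrt_mul (by positivity),
    dist_sq_eq_fin_two]
  gcongr
  rw [mul_pow, sq_abs, sq_abs] at hcone
  linarith

theorem abs_div_le_mul_gradient_infDist (hf : LipschitzWith L f) {σ : ℝ}
    (hσ : 0 < σ * (u 1 - f (u 0)))
    (hdiff : DifferentiableAt ℝ (infDist · (planeGraph f)) u) :
    |σ| / √((L : ℝ) ^ 2 + 1) ≤ σ * gradient (infDist · (planeGraph f)) u 1 := by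
  obtain ⟨p, hp, hnear⟩ := (isClosed hf.continuous).exists_infDist_eq_dist (nonempty f) u
  have hu : u ∉ planeGraph f := fun hu => by simp [show u 1 = f (u 0) from hu] at hσ
  have hup : u ≠ p := fun h => hu (h ▸ hp)
  have hsign := sub_apply_one_mul_pos_of_infDist_eq hf hu hp hnear
  have hσb : 0 < σ * (u 1 - p 1) := by nlinarith [mul_pos hσ hsign, sq_nonneg (u 1 - f (u 0))]
  rw [gradient_infDist_eq_of_infDist_eq_dist hp hnear hup hdiff, PiLp.smul_apply,
    PiLp.sub_apply, smul_eq_mul, ← mul_assoc, mul_comm σ, mul_assoc, ← abs_of_pos hσb, abs_mul,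
    inv_mul_eq_div, div_le_div_iff₀ (by positivity) (dist_pos.2 hup)]
  calc |σ| * dist u p ≤ |σ| * (√((L : ℝ) ^ 2 + 1) * |u 1 - p 1|) := by
        gcongr; exact dist_le_sqrt_mul_abs_of_infDist_eq hf hp hnear
    _ = _ := by ring

end planeGraph

theorem clarke_gradient_dist_graph_second_coordinate (f : ℝ → ℝ) (L : NNReal)
    (hf : LipschitzWith L f)
    (x : EuclideanSpace ℝ (Fin 2))
    (hx : x ∉ {p : EuclideanSpace ℝ (Fin 2) | p 1 = f (p 0)}) :
    ∀ ξ ∈ clarkeGradient (fun y => Metric.infDist y {p : EuclideanSpace ℝ (Fin 2) | p 1 = f (p 0)}) x,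
      1 / Real.sqrt ((L : ℝ) ^ 2 + 1) ≤ |ξ 1| := by
  intro ξ hξ
  set σ := x 1 - f (x 0)
  have hσ : σ ≠ 0 := sub_ne_zero.2 hx
  have hside : ∀ᶠ u in nhds x, 0 < σ * (u 1 - f (u 0)) :=
    (Continuous.tendsto (by have := hf.continuous; fun_prop) x).eventually
      (eventually_gt_nhds (mul_self_pos.2 hσ))
  have hξσ : |σ| / √((L : ℝ) ^ 2 + 1) ≤ σ * ξ 1 :=
    clarkeGradient_subset_of_eventually
      (convex_halfSpace_ge (σ • EuclideanSpace.proj (1 : Fin 2)).toLinearMap.isLinear _)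
      (isClosed_le continuous_const (by fun_prop))
      (hside.mono fun u hu hdiff => planeGraph.abs_div_le_mul_gradient_infDist hf hu hdiff) hξ
  refine le_of_mul_le_mul_left ?_ (abs_pos.2 hσ)
  calc |σ| * (1 / √((L : ℝ) ^ 2 + 1)) = |σ| / √((L : ℝ) ^ 2 + 1) := mul_one_div _ _
    _ ≤ σ * ξ 1 := hξσ
    _ ≤ |σ| * |ξ 1| := (le_abs_self _).trans (abs_mul _ _).le
end

section
/- Let f : ℝ → ℝ be L-Lipschitz with f(0) < 0, let r = dist(0, graph f), and suppose (u, v) is a nearest point of graph f to the origin. Then |u| ≤ Lr/√(1 + L²) and v ≤ −r/√(1 + L²). -/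
/-!
Write `(u, v)` for the nearest point, so that `u` minimises `t ↦ t² + f(t)²`. Moving along the
ray from `(u, v)` towards the origin, `t = (1 - ε) u`, Lipschitz continuity keeps `|f t|` within
`ε L |u|` of `|v|`; first-order optimality then forces `|u| ≤ L |v|`. The nearest point is below
the axis: otherwise the graph meets the axis at some `t` between `0` and `u`, and minimality gives
`v = 0`, hence `u = 0` and `f 0 = 0`. Finally `r² = u² + v²` together with `u² ≤ L² v²` yields
both bounds.
-/

open Set NNReal

section Minimizer

variable {f : ℝ → ℝ} {L : ℝ≥0} {u : ℝ}

theorem abs_le_mul_abs_of_isMinOn (hf : LipschitzWith L f)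
    (hu : IsMinOn (fun t ↦ t ^ 2 + f t ^ 2) univ u) : |u| ≤ L * |f u| := by
  by_contra! h
  have hu0 : 0 < |u| := lt_of_le_of_lt (by positivity) h
  have hA : 0 < u ^ 2 - L * |u| * |f u| := by nlinarith [mul_pos hu0 (sub_pos.2 h), sq_abs u]
  have hB : 0 < u ^ 2 * (1 + (L : ℝ) ^ 2) := by have := abs_pos.mp hu0; positivity
  -- At `t = (1 - ε) u` the value `t² + f(t)²` drops by at least `2εA - ε²B`, where `A` and `B`
  -- are the numerator and denominator of `ε`; this choice of `ε` makes the drop `εA > 0`.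
  set ε := (u ^ 2 - L * |u| * |f u|) / (u ^ 2 * (1 + (L : ℝ) ^ 2))
  have hε : 0 < ε := div_pos hA hB
  have hεB : ε * (u ^ 2 * (1 + (L : ℝ) ^ 2)) = u ^ 2 - L * |u| * |f u| := div_mul_cancel₀ _ hB.ne'
  have hfε : |f ((1 - ε) * u)| ≤ |f u| + L * (ε * |u|) := by
    have hdist := hf.dist_le_mul ((1 - ε) * u) u
    rw [Real.dist_eq, Real.dist_eq, show (1 - ε) * u - u = -(ε * u) by ring, abs_neg, abs_mul,
      abs_of_pos hε] at hdist
    linarith [abs_sub_abs_le_abs_sub (f ((1 - ε) * u)) (f u)]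
  have hsq : f ((1 - ε) * u) ^ 2 ≤ (|f u| + L * (ε * |u|)) ^ 2 := by
    simpa only [sq_abs] using pow_le_pow_left₀ (abs_nonneg _) hfε 2
  have hmin : u ^ 2 + f u ^ 2 ≤ ((1 - ε) * u) ^ 2 + f ((1 - ε) * u) ^ 2 := hu (mem_univ _)
  have hdecrease : ((1 - ε) * u) ^ 2 + (|f u| + L * (ε * |u|)) ^ 2
      = u ^ 2 + f u ^ 2 - ε * (u ^ 2 - L * |u| * |f u|) := by
    linear_combination (L : ℝ) ^ 2 * ε ^ 2 * sq_abs u + sq_abs (f u) + ε * hεB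
  nlinarith [mul_pos hε hA]

theorem neg_of_isMinOn (hf : LipschitzWith L f) (hf0 : f 0 < 0)
    (hu : IsMinOn (fun t ↦ t ^ 2 + f t ^ 2) univ u) : f u < 0 := by
  by_contra! hfu
  obtain ⟨t, ht, hft⟩ : ∃ t ∈ uIcc 0 u, f t = 0 :=
    intermediate_value_uIcc hf.continuous.continuousOn (mem_uIcc_of_le hf0.le hfu)
  have htu : |t| ≤ |u| := by simpa using abs_sub_left_of_mem_uIcc ht
  have hmin : u ^ 2 + f u ^ 2 ≤ t ^ 2 + f t ^ 2 := hu (mem_univ t)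
  have hfu0 : f u = 0 := by
    nlinarith [sq_abs t, sq_abs u, abs_nonneg t, pow_le_pow_left₀ (abs_nonneg t) htu 2]
  have hu0 : u = 0 := by
    simpa [hfu0] using abs_le_mul_abs_of_isMinOn hf hu
  exact hf0.ne (hu0 ▸ hfu0)

end Minimizer

theorem abs_le_and_le_neg_of_abs_le_mul_abs {L u v r : ℝ} (hL : 0 ≤ L) (huv : |u| ≤ L * |v|)
    (hv : v < 0) (hr : u ^ 2 + v ^ 2 = r ^ 2) (hr0 : 0 ≤ r) :
    |u| ≤ L * r / √(1 + L ^ 2) ∧ v ≤ -(r / √(1 + L ^ 2)) := by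
  have hu2 : u ^ 2 ≤ L ^ 2 * v ^ 2 := by
    simpa only [sq_abs, mul_pow] using pow_le_pow_left₀ (abs_nonneg u) huv 2
  have hs : √(1 + L ^ 2) ^ 2 = 1 + L ^ 2 := Real.sq_sqrt (by positivity)
  have hs0 : 0 < √(1 + L ^ 2) := by positivity
  constructor
  · rw [le_div_iff₀ hs0]
    nlinarith [abs_nonneg u, mul_nonneg hL hr0, sq_abs u, mul_nonneg (abs_nonneg u) hs0.le]
  · rw [le_neg, div_le_iff₀ hs0]
    nlinarith [mul_pos (neg_pos.mpr hv) hs0, sq_nonneg (v * √(1 + L ^ 2) + r)]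

theorem EuclideanSpace.dist_zero_sq_fin_two (q : EuclideanSpace ℝ (Fin 2)) :
    dist 0 q ^ 2 = q 0 ^ 2 + q 1 ^ 2 := by
  rw [dist_zero_left, EuclideanSpace.real_norm_sq_eq, Fin.sum_univ_two]

theorem nearest_point_on_graph_estimates (f : ℝ → ℝ) (L : NNReal)
    (hf : LipschitzWith L f) (hf0 : f 0 < 0)
    (r : ℝ)
    (hr : r = Metric.infDist (0 : EuclideanSpace ℝ (Fin 2))
      {p : EuclideanSpace ℝ (Fin 2) | p 1 = f (p 0)})
    (p : EuclideanSpace ℝ (Fin 2))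
    (hp : p 1 = f (p 0))
    (hnear : dist (0 : EuclideanSpace ℝ (Fin 2)) p = r) :
    |p 0| ≤ (L : ℝ) * r / Real.sqrt (1 + (L : ℝ) ^ 2) ∧
      p 1 ≤ -(r / Real.sqrt (1 + (L : ℝ) ^ 2)) := by
  have hr0 : 0 ≤ r := hnear ▸ dist_nonneg
  have hr2 : p 0 ^ 2 + f (p 0) ^ 2 = r ^ 2 := by
    rw [← hp, ← EuclideanSpace.dist_zero_sq_fin_two, hnear]
  have hmin : IsMinOn (fun t ↦ t ^ 2 + f t ^ 2) univ (p 0) := fun t _ ↦ by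
    have hle : r ≤ dist 0 !₂[t, f t] := hr ▸ Metric.infDist_le_dist_of_mem (by simp)
    have hsq := pow_le_pow_left₀ hr0 hle 2
    rwa [EuclideanSpace.dist_zero_sq_fin_two, ← hr2] at hsq
  rw [hp]
  exact abs_le_and_le_neg_of_abs_le_mul_abs L.2 (abs_le_mul_abs_of_isMinOn hf hmin)
    (neg_of_isMinOn hf hf0 hmin) hr2 hr0
end

section
/- Let X be the space of 1-Lipschitz functions f : B(0,4) → [0,4] in ℝ^d with f ≥ 1 outside U(0,3), with the supremum metric. Then the set D of those f ∈ X that can be written as g − h with g, h convex Lipschitz functions on B(0,4) is an F_σ subset of X; specifically D = X ∩ ⋃_{n≥1} (C_n − C_n) where C_n is the compact set of convex n-Lipschitz functions bounded by 4n+4 on B(0,4). -/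
open Metric

/-- The space `X` of 1-Lipschitz functions `B(0,4) → [0,4]` that are `≥ 1` outside `U(0,3)`. -/
def Xset (d : ℕ) : Set C(closedBall (0 : EuclideanSpace ℝ (Fin d)) 4, ℝ) :=
  {f | LipschitzWith 1 f ∧ (∀ x, f x ∈ Set.Icc (0 : ℝ) 4) ∧
    ∀ x : closedBall (0 : EuclideanSpace ℝ (Fin d)) 4,
      (x : EuclideanSpace ℝ (Fin d)) ∉ ball (0 : EuclideanSpace ℝ (Fin d)) 3 → 1 ≤ f x}

/-- The set `C_n` of convex `n`-Lipschitz functions on `B(0,4)` bounded in absolute value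
by `4n+4`. -/
def Cnset (d n : ℕ) : Set C(closedBall (0 : EuclideanSpace ℝ (Fin d)) 4, ℝ) :=
  {g | (∃ G : EuclideanSpace ℝ (Fin d) → ℝ,
      ConvexOn ℝ (closedBall (0 : EuclideanSpace ℝ (Fin d)) 4) G ∧
      ∀ x : closedBall (0 : EuclideanSpace ℝ (Fin d)) 4, g x = G x) ∧
    LipschitzWith n g ∧ ∀ x, |g x| ≤ 4 * n + 4}

/-- The set `D` of elements of `X` expressible as differences of convex Lipschitz
functions on `B(0,4)`. -/
def Dset (d : ℕ) : Set C(closedBall (0 : EuclideanSpace ℝ (Fin d)) 4, ℝ) :=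
  {f | f ∈ Xset d ∧ ∃ g h : EuclideanSpace ℝ (Fin d) → ℝ,
    ConvexOn ℝ (closedBall (0 : EuclideanSpace ℝ (Fin d)) 4) g ∧
    ConvexOn ℝ (closedBall (0 : EuclideanSpace ℝ (Fin d)) 4) h ∧
    (∃ K : NNReal, LipschitzOnWith K g (closedBall (0 : EuclideanSpace ℝ (Fin d)) 4)) ∧
    (∃ K : NNReal, LipschitzOnWith K h (closedBall (0 : EuclideanSpace ℝ (Fin d)) 4)) ∧
    ∀ x : closedBall (0 : EuclideanSpace ℝ (Fin d)) 4, f x = g x - h x}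

/-
`C_n` is compact by Arzelà–Ascoli: its members are uniformly `n`-Lipschitz, and having a convex
extension, being `n`-Lipschitz and being bounded by `4n + 4` are all closed conditions in the
topology of pointwise convergence. So `C_n − C_n`, the image of `C_n × C_n` under subtraction, is
compact, hence closed. Conversely, if `f = g − h` with `g`, `h` convex and Lipschitz, subtracting
`h 0` from both gives `|h − h 0| ≤ 4n` and, since `0 ≤ f 0 ≤ 4`, `|g − h 0| ≤ 4n + 4`, where `n`
bounds both Lipschitz constants.
-/

open Set
open scoped NNReal Pointwise

theorem IsCompact.sub {G : Type*} [Sub G] [TopologicalSpace G] [ContinuousSub G]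
    {s t : Set G} (hs : IsCompact s) (ht : IsCompact t) : IsCompact (s - t) := by
  rw [← Set.sub_image_prod]
  exact (hs.prod ht).image continuous_sub

section ConvexExtension

variable {E : Type*} [AddCommGroup E] [Module ℝ E] {s : Set E}

theorem exists_convexOn_eq_iff (hs : Convex ℝ s) (φ : s → ℝ) :
    (∃ G : E → ℝ, ConvexOn ℝ s G ∧ ∀ x : s, φ x = G x) ↔
      ∀ (x y : s) (a b : ℝ) (ha : 0 ≤ a) (hb : 0 ≤ b) (hab : a + b = 1),
        φ ⟨a • x + b • y, hs x.2 y.2 ha hb hab⟩ ≤ a * φ x + b * φ y := by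
  classical
  constructor
  · rintro ⟨G, hG, hφG⟩ x y a b ha hb hab
    simpa only [hφG, smul_eq_mul] using hG.2 x.2 y.2 ha hb hab
  · intro hφ
    refine ⟨fun z => if hz : z ∈ s then φ ⟨z, hz⟩ else 0, ⟨hs, ?_⟩, fun x => by simp [x.2]⟩
    intro x hx y hy a b ha hb hab
    simpa only [dif_pos hx, dif_pos hy, dif_pos (hs hx hy ha hb hab), smul_eq_mul]
      using hφ ⟨x, hx⟩ ⟨y, hy⟩ a b ha hb hab

theorem isClosed_setOf_exists_convexOn_eq (hs : Convex ℝ s) :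
    IsClosed {φ : s → ℝ | ∃ G : E → ℝ, ConvexOn ℝ s G ∧ ∀ x : s, φ x = G x} := by
  simp only [exists_convexOn_eq_iff hs, ofPred_forall]
  refine isClosed_iInter fun x => isClosed_iInter fun y => isClosed_iInter fun a =>
    isClosed_iInter fun b => isClosed_iInter fun ha => isClosed_iInter fun hb =>
    isClosed_iInter fun hab => isClosed_le (continuous_apply _) (by fun_prop)

end ConvexExtension

theorem ContinuousMap.isCompact_setOf_lipschitzWith_abs_le {X : Type*} [PseudoMetricSpace X]
    {S : Set (X → ℝ)} (hS : IsClosed S) (K : ℝ≥0) (M : ℝ) :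
    IsCompact {g : C(X, ℝ) | ⇑g ∈ S ∧ LipschitzWith K g ∧ ∀ x, |g x| ≤ M} := by
  refine ArzelaAscoli.isCompact_of_equicontinuous _ ?_
    (LipschitzWith.uniformEquicontinuous _ K fun g => g.2.2.1).equicontinuous
  have himage : ContinuousMap.toFun '' {g : C(X, ℝ) | ⇑g ∈ S ∧ LipschitzWith K g ∧ ∀ x, |g x| ≤ M}
      = S ∩ {φ | LipschitzWith K φ} ∩ ⋂ x, {φ | |φ x| ≤ M} := by
    ext φ
    simp only [mem_image, mem_inter_iff, mem_iInter, mem_ofPred_eq]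
    constructor
    · rintro ⟨g, ⟨hgS, hgK, hgM⟩, rfl⟩
      exact ⟨⟨hgS, hgK⟩, hgM⟩
    · rintro ⟨⟨hφS, hφK⟩, hφM⟩
      exact ⟨⟨φ, hφK.continuous⟩, ⟨hφS, hφK, hφM⟩, rfl⟩
  rw [himage]
  refine (isCompact_univ_pi fun _ => isCompact_Icc (a := -M) (b := M)).of_isClosed_subset
    ((hS.inter (isClosed_setOfPred_lipschitzWith K)).inter
      (isClosed_iInter fun x => isClosed_le (continuous_apply x).abs continuous_const)) ?_
  rintro φ ⟨-, hφM⟩ x -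
  exact abs_le.1 (mem_iInter.1 hφM x)

section Cnset

variable {d : ℕ}

theorem isCompact_Cnset (n : ℕ) : IsCompact (Cnset d n) :=
  ContinuousMap.isCompact_setOf_lipschitzWith_abs_le
    (isClosed_setOf_exists_convexOn_eq (convex_closedBall _ _)) n (4 * n + 4)

theorem exists_mem_Cnset_eq_sub_const {G : EuclideanSpace ℝ (Fin d) → ℝ}
    (hG : ConvexOn ℝ (closedBall 0 4) G) {K : ℝ≥0} (hGK : LipschitzOnWith K G (closedBall 0 4))
    {n : ℕ} (hKn : K ≤ n) (c : ℝ) (hc : |G 0 - c| ≤ 4) :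
    ∃ g ∈ Cnset d n, ∀ x : closedBall (0 : EuclideanSpace ℝ (Fin d)) 4, g x = G x - c := by
  have hGn : LipschitzWith n fun x : closedBall (0 : EuclideanSpace ℝ (Fin d)) 4 => G x - c :=
    LipschitzWith.of_dist_le_mul fun x y => by
      rw [dist_sub_right]
      exact (hGK.weaken hKn).dist_le_mul x x.2 y y.2
  refine ⟨⟨_, hGn.continuous⟩, ⟨⟨fun z => G z - c, ?_, fun x => rfl⟩, hGn, fun x => ?_⟩,
    fun x => rfl⟩
  · exact hG.sub (concaveOn_const c (convex_closedBall _ _))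
  · have hx : dist (G x) (G 0) ≤ n * 4 := by
      calc dist (G x) (G 0) ≤ n * dist (x : EuclideanSpace ℝ (Fin d)) 0 :=
            (hGK.weaken hKn).dist_le_mul x x.2 0 (mem_closedBall_self (by norm_num))
        _ ≤ n * 4 := by gcongr; exact mem_closedBall.1 x.2
    calc |G x - c| = |(G x - G 0) + (G 0 - c)| := by rw [sub_add_sub_cancel]
      _ ≤ |G x - G 0| + |G 0 - c| := abs_add_le _ _
      _ ≤ 4 * n + 4 := by rw [← Real.dist_eq]; linarith

theorem Cnset.exists_convexOn_lipschitzOnWith {n : ℕ}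
    {g : C(closedBall (0 : EuclideanSpace ℝ (Fin d)) 4, ℝ)} (hg : g ∈ Cnset d n) :
    ∃ G : EuclideanSpace ℝ (Fin d) → ℝ, ConvexOn ℝ (closedBall 0 4) G ∧
      LipschitzOnWith n G (closedBall 0 4) ∧ ∀ x, g x = G x := by
  obtain ⟨⟨G, hG, hgG⟩, hgn, -⟩ := hg
  refine ⟨G, hG, lipschitzOnWith_iff_restrict.2 ?_, hgG⟩
  convert hgn using 1
  exact funext fun x => (hgG x).symm

end Cnset

theorem Dset_eq_inter_iUnion_sub_Cnset (d : ℕ) :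
    Dset d = Xset d ∩ ⋃ n : ℕ, (Cnset d n - Cnset d n) := by
  ext f
  constructor
  · rintro ⟨hfX, g, h, hg, hh, ⟨Kg, hgK⟩, ⟨Kh, hhK⟩, hfgh⟩
    refine ⟨hfX, mem_iUnion.2 ⟨⌈max Kg Kh⌉₊, ?_⟩⟩
    have hf₀ := hfX.2.1 ⟨0, mem_closedBall_self (by norm_num)⟩
    rw [hfgh] at hf₀
    obtain ⟨g', hg', hg'g⟩ := exists_mem_Cnset_eq_sub_const hg hgK
      (le_max_left _ _ |>.trans (Nat.le_ceil _)) (h 0) (abs_le.2 ⟨by linarith [hf₀.1], hf₀.2⟩)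
    obtain ⟨h', hh', hh'h⟩ := exists_mem_Cnset_eq_sub_const hh hhK
      (le_max_right _ _ |>.trans (Nat.le_ceil _)) (h 0) (by simp)
    refine ⟨g', hg', h', hh', ContinuousMap.ext fun x => ?_⟩
    simp only [ContinuousMap.sub_apply, hg'g, hh'h, hfgh x]
    ring
  · rintro ⟨hfX, hf⟩
    obtain ⟨n, g, hg, h, hh, rfl⟩ := mem_iUnion.1 hf
    obtain ⟨G, hG, hGn, hgG⟩ := Cnset.exists_convexOn_lipschitzOnWith hg
    obtain ⟨H, hH, hHn, hhH⟩ := Cnset.exists_convexOn_lipschitzOnWith hh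
    exact ⟨hfX, G, H, hG, hH, ⟨n, hGn⟩, ⟨n, hHn⟩,
      fun x => by simp only [ContinuousMap.sub_apply, hgG, hhH]⟩

theorem Dset_Fsigma (d : ℕ) :
    (∃ F : ℕ → Set C(closedBall (0 : EuclideanSpace ℝ (Fin d)) 4, ℝ),
      (∀ n, IsClosed (F n)) ∧ Dset d = Xset d ∩ ⋃ n, F n) ∧
    Dset d = Xset d ∩ ⋃ n : ℕ,
      {φ | ∃ g ∈ Cnset d n, ∃ h ∈ Cnset d n, φ = g - h} := by
  have hsub : ∀ n, {φ | ∃ g ∈ Cnset d n, ∃ h ∈ Cnset d n, φ = g - h} = Cnset d n - Cnset d n :=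
    fun n => by ext; simp only [mem_ofPred_eq, mem_sub, eq_comm]
  simp only [hsub]
  have hD := Dset_eq_inter_iUnion_sub_Cnset d
  exact ⟨⟨_, fun n => ((isCompact_Cnset n).sub (isCompact_Cnset n)).isClosed, hD⟩, hD⟩
end
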